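/- In the one-dimensional split framework, fix α ≥ 0 and define the penalized impurity decrease Δ_α(s) = (4·P(s)·(1 − P(s)))^α · Δ(s); let s*_α ∈ [a,b] be a maximizer of Δ_α over [a,b] and suppose Δ_α(s*_α) > 0. Then 4·P(s*_α)·(1 − P(s*_α)) ≥ ( 2^{−α}·(1 − α)²·Δ_α(s*_α) / (Ḡ(s*_α)² + (1 − α)²·Δ_α(s*_α)) )^{1/(α+1)}, and both P(s*_α) and 1 − P(s*_α) lie in the closed interval [(1 − √(1 − r))/2, (1 + √(1 − r))/2], where r denotes the quantity ( 2^{−α}·(1 − α)²·Δ_α(s*_α) / (Ḡ(s*_α)² + (1 − α)²·Δ_α(s*_α)) )^{1/(α+1)}. -/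

import Mathlib

/-!
The maximizer `s` of `Δ_α` is interior (`Δ_α` vanishes at the endpoints), so the derivative of
`Δ_α = (4q(1-q))^α Ξ²/(q(1-q))` vanishes there, which gives `2q(1-q)Ḡ = (1-α)(1-2q)Ξ` with
`q = P(s)`. Squaring and using `(1-2q)² = 1-B` for `B = 4q(1-q)` yields
`Ḡ² B^(α+1) = (1-α)² Δ_α (1-B)`, so the ratio inside `r` is
`2^(-α) B^(α+1) / (1 - B + B^(α+1))`.
Bernoulli's inequality gives `2^(-α) ≤ 1 - B + B^(α+1)` on `[0,1]`, hence `r ≤ B`, and the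
bounds on `q` and `1 - q` are the roots of `4q(1-q) = r`.
-/

open MeasureTheory Set Real

lemma two_rpow_neg_le_one_sub_add_rpow {α B : ℝ} (hα : 0 ≤ α) (hB0 : 0 ≤ B)
    (hB1 : B ≤ 1) :
    (2 : ℝ) ^ (-α) ≤ 1 - B + B ^ (α + 1) := by
  have ht : 1 ≤ α + 1 := by linarith
  have hpow : 1 + (α + 1) * 1 ≤ (1 + 1 : ℝ) ^ (α + 1) :=
    one_add_mul_self_le_rpow_one_add (by norm_num) ht
  have hbern : 1 + (α + 1) * (2 * B - 1) ≤ (1 + (2 * B - 1)) ^ (α + 1) :=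
    one_add_mul_self_le_rpow_one_add (by linarith) ht
  have h2 : (0 : ℝ) < 2 ^ (α + 1) := by positivity
  rw [show (1 + 1 : ℝ) = 2 by norm_num] at hpow
  rw [show 1 + (2 * B - 1) = 2 * B by ring, mul_rpow (by norm_num) hB0] at hbern
  rw [show -α = 1 - (α + 1) by ring, rpow_sub (by norm_num), rpow_one, div_le_iff₀ h2]
  nlinarith [mul_nonneg hB0 (sub_nonneg.2 hpow), mul_nonneg (sub_nonneg.2 hB1) h2.le]

lemma mem_Icc_of_le_four_mul_mul_one_sub {q r : ℝ} (h : r ≤ 4 * q * (1 - q)) :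
    q ∈ Icc ((1 - √(1 - r)) / 2) ((1 + √(1 - r)) / 2) := by
  have habs : |1 - 2 * q| ≤ √(1 - r) :=
    abs_le_sqrt (by nlinarith)
  rw [abs_le] at habs
  constructor <;> linarith

lemma two_rpow_neg_mul_div_add_le {α B u v : ℝ} (hα : 0 ≤ α) (hB0 : 0 ≤ B) (hB1 : B ≤ 1)
    (hu : 0 ≤ u) (hv : 0 ≤ v) (h : u * B ^ (α + 1) = v * (1 - B)) :
    2 ^ (-α) * v / (u + v) ≤ B ^ (α + 1) := by
  rcases (add_nonneg hu hv).eq_or_lt with huv | huv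
  · rw [← huv, div_zero]
    positivity
  rw [div_le_iff₀ huv]
  calc 2 ^ (-α) * v ≤ (1 - B + B ^ (α + 1)) * v :=
        mul_le_mul_of_nonneg_right (two_rpow_neg_le_one_sub_add_rpow hα hB0 hB1) hv
    _ = B ^ (α + 1) * (u + v) := by linear_combination -h

lemma hasDerivAt_integral_of_continuousOn {f : ℝ → ℝ} {a b s : ℝ}
    (hf : ContinuousOn f (Icc a b)) (hs : s ∈ Ioo a b) :
    HasDerivAt (fun t => ∫ u in a..t, f u) (f s) s :=
  intervalIntegral.integral_hasDerivAt_right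
    (hf.mono (uIcc_of_le hs.1.le ▸ Icc_subset_Icc_right hs.2.le)).intervalIntegrable
    ((hf.mono Ioo_subset_Icc_self).stronglyMeasurableAtFilter isOpen_Ioo s hs)
    (hf.continuousAt (Icc_mem_nhds hs.1 hs.2))

lemma intervalIntegral_mem_Ioo_zero_one {p : ℝ → ℝ} {a b s : ℝ}
    (hp_cont : ContinuousOn p (Icc a b)) (hp_pos : ∀ u ∈ Icc a b, 0 < p u)
    (hp_one : ∫ u in a..b, p u = 1) (hs : s ∈ Ioo a b) :
    (∫ u in a..s, p u) ∈ Ioo 0 1 := by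
  have hint : ∀ {c d}, a ≤ c → d ≤ b → c ≤ d → IntervalIntegrable p volume c d :=
    fun hac hdb hcd => (hp_cont.mono (uIcc_of_le hcd ▸ Icc_subset_Icc hac hdb)).intervalIntegrable
  have hleft : 0 < ∫ u in a..s, p u :=
    intervalIntegral.intervalIntegral_pos_of_pos_on (hint le_rfl hs.2.le hs.1.le)
      (fun u hu => hp_pos u ⟨hu.1.le, hu.2.le.trans hs.2.le⟩) hs.1
  have hright : 0 < ∫ u in s..b, p u :=
    intervalIntegral.intervalIntegral_pos_of_pos_on (hint hs.1.le le_rfl hs.2.le)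
      (fun u hu => hp_pos u ⟨hs.1.le.trans hu.1.le, hu.2.le⟩) hs.2
  rw [← intervalIntegral.integral_interval_sub_left (hint le_rfl le_rfl (hs.1.trans hs.2).le)
    (hint le_rfl hs.2.le hs.1.le), hp_one] at hright
  exact ⟨hleft, by linarith⟩

lemma penalizedGain_stationary_of_isLocalMax {P Xi : ℝ → ℝ} {s p₀ G α : ℝ}
    (hP : HasDerivAt P p₀ s) (hXi : HasDerivAt Xi (G * p₀) s) (hp₀ : p₀ ≠ 0)
    (hc : 0 < P s * (1 - P s)) (hXi0 : Xi s ≠ 0)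
    (hmax : IsLocalMax (fun t => (4 * P t * (1 - P t)) ^ α * (Xi t ^ 2 / (P t * (1 - P t)))) s) :
    2 * (P s * (1 - P s)) * G = (1 - α) * (1 - 2 * P s) * Xi s := by
  set q := P s with hq
  have hc' : HasDerivAt (fun t => P t * (1 - P t)) ((1 - 2 * q) * p₀) s :=
    (hP.mul (hP.const_sub 1)).congr_deriv (by ring)
  have h4c : 4 * q * (1 - q) ≠ 0 := by linarith
  have hderiv : HasDerivAt
      (fun t => (4 * P t * (1 - P t)) ^ α * (Xi t ^ 2 / (P t * (1 - P t))))
      ((4 * q * (1 - q)) ^ α * Xi s * p₀ / (q * (1 - q)) ^ 2 *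
        ((α - 1) * (1 - 2 * q) * Xi s + 2 * (q * (1 - q)) * G)) s := by
    have hB : HasDerivAt (fun t => 4 * P t * (1 - P t)) (4 * ((1 - 2 * q) * p₀)) s := by
      simpa only [mul_assoc] using hc'.const_mul 4
    refine ((hB.rpow_const (p := α) (Or.inl h4c)).mul
      ((hXi.fun_pow 2).fun_div hc' hc.ne')).congr_deriv ?_
    rw [rpow_sub_one h4c, ← hq]
    field_simp
    ring
  have hfactor : (4 * q * (1 - q)) ^ α * Xi s * p₀ / (q * (1 - q)) ^ 2 ≠ 0 := by
    have : 0 < (4 * q * (1 - q)) ^ α := by apply rpow_pos_of_pos; linarith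
    positivity
  have := (mul_eq_zero.1 (hmax.hasDerivAt_eq_zero hderiv)).resolve_left hfactor
  linear_combination this

theorem penalized_best_split_probability_bounds_general
    (a b : ℝ)
    (p g : ℝ → ℝ)
    (hp_cont : ContinuousOn p (Set.Icc a b))
    (hp_pos : ∀ u ∈ Set.Icc a b, 0 < p u)
    (hp_one : (∫ u in a..b, p u) = 1)
    (hg_cont : ContinuousOn g (Set.Icc a b))
    (P M Xi G Δ : ℝ → ℝ)
    (hP : ∀ s, P s = ∫ u in a..s, p u)
    (hM : ∀ s, M s = ∫ u in a..s, g u * p u)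
    (hXi : ∀ s, Xi s = M s - M b * P s)
    (hG : ∀ s, G s = g s - M b)
    (hΔ : ∀ s, Δ s = Xi s ^ 2 / (P s * (1 - P s)))
    (α : ℝ) (hα : 0 ≤ α)
    (Δα : ℝ → ℝ)
    (hΔα : ∀ s, Δα s = (4 * P s * (1 - P s)) ^ α * Δ s)
    (sα : ℝ) (hmem : sα ∈ Set.Icc a b)
    (hmax : ∀ s ∈ Set.Icc a b, Δα s ≤ Δα sα)
    (hpos : 0 < Δα sα)
    (r : ℝ)
    (hr : r = ((2 : ℝ) ^ (-α) * (1 - α) ^ 2 * Δα sα /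
        (G sα ^ 2 + (1 - α) ^ 2 * Δα sα)) ^ (1 / (α + 1))) :
    r ≤ 4 * P sα * (1 - P sα) ∧
    P sα ∈ Set.Icc ((1 - Real.sqrt (1 - r)) / 2) ((1 + Real.sqrt (1 - r)) / 2) ∧
    (1 - P sα) ∈ Set.Icc ((1 - Real.sqrt (1 - r)) / 2) ((1 + Real.sqrt (1 - r)) / 2) := by
  have hΔα_eq : Δα = fun t => (4 * P t * (1 - P t)) ^ α * (Xi t ^ 2 / (P t * (1 - P t))) :=
    funext fun t => by rw [hΔα, hΔ]
  have hsα : sα ∈ Ioo a b := by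
    refine ⟨hmem.1.lt_of_ne ?_, hmem.2.lt_of_ne ?_⟩ <;> rintro rfl <;>
      simp [hΔα_eq, hP, hp_one] at hpos
  have hXi0 : Xi sα ≠ 0 := by
    rintro h
    simp [hΔα_eq, h] at hpos
  obtain ⟨hq0, hq1⟩ : P sα ∈ Ioo 0 1 :=
    hP sα ▸ intervalIntegral_mem_Ioo_zero_one hp_cont hp_pos hp_one hsα
  have hPd : HasDerivAt P (p sα) sα :=
    funext hP ▸ hasDerivAt_integral_of_continuousOn hp_cont hsα
  have hMd : HasDerivAt M (g sα * p sα) sα :=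
    funext hM ▸ hasDerivAt_integral_of_continuousOn (hg_cont.mul hp_cont) hsα
  have hXid : HasDerivAt Xi (G sα * p sα) sα :=
    funext hXi ▸ (hMd.sub (hPd.const_mul (M b))).congr_deriv (by rw [hG]; ring)
  have hlocal : IsLocalMax Δα sα :=
    IsMaxOn.isLocalMax hmax (Icc_mem_nhds hsα.1 hsα.2)
  have hstat := penalizedGain_stationary_of_isLocalMax hPd hXid (hp_pos sα hmem).ne'
    (mul_pos hq0 (by linarith)) hXi0 (hΔα_eq ▸ hlocal)
  set B := 4 * P sα * (1 - P sα)
  have hB0 : 0 ≤ B := by positivity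
  have hB1 : B ≤ 1 := by nlinarith [sq_nonneg (1 - 2 * P sα)]
  have hratio : 2 ^ (-α) * (1 - α) ^ 2 * Δα sα / (G sα ^ 2 + (1 - α) ^ 2 * Δα sα) ≤
      B ^ (α + 1) := by
    rw [mul_assoc]
    refine two_rpow_neg_mul_div_add_le hα hB0 hB1 (sq_nonneg _) (by positivity) ?_
    rw [hΔα_eq, rpow_add_one (by positivity)]
    field_simp
    linear_combination
      B ^ α * (2 * (P sα * (1 - P sα)) * G sα + (1 - α) * (1 - 2 * P sα) * Xi sα) * hstat
  have hr_le : r ≤ B := by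
    rw [hr, one_div, rpow_inv_le_iff_of_pos _ hB0 (by positivity)]
    · exact hratio
    · exact div_nonneg (mul_nonneg (by positivity) hpos.le) (by positivity)
  exact ⟨hr_le, mem_Icc_of_le_four_mul_mul_one_sub hr_le,
    mem_Icc_of_le_four_mul_mul_one_sub (by linarith)⟩

/-- For the penalized impurity decrease
`Δ_α(s) = (4P(s)(1−P(s)))^α Δ(s)` with `α ≥ 0`, any maximizer `s*_α` with
`Δ_α(s*_α) > 0` satisfies
`4P(s*_α)(1−P(s*_α)) ≥ (2^{−α}(1−α)²Δ_α(s*_α)/(Ḡ(s*_α)² + (1−α)²Δ_α(s*_α)))^{1/(α+1)}`,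
and both `P(s*_α)` and `1 − P(s*_α)` lie in the corresponding closed interval. -/
theorem penalized_best_split_probability_bounds
    (a b : ℝ) (hab : a < b)
    (p g : ℝ → ℝ)
    (hp_cont : ContinuousOn p (Set.Icc a b))
    (hp_pos : ∀ u ∈ Set.Icc a b, 0 < p u)
    (hp_one : (∫ u in a..b, p u) = 1)
    (hg_cont : ContinuousOn g (Set.Icc a b))
    (P M Xi G Δ : ℝ → ℝ)
    (hP : ∀ s, P s = ∫ u in a..s, p u)
    (hM : ∀ s, M s = ∫ u in a..s, g u * p u)
    (hXi : ∀ s, Xi s = M s - M b * P s)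
    (hG : ∀ s, G s = g s - M b)
    (hΔ : ∀ s, Δ s = Xi s ^ 2 / (P s * (1 - P s)))
    (α : ℝ) (hα : 0 ≤ α)
    (Δα : ℝ → ℝ)
    (hΔα : ∀ s, Δα s = (4 * P s * (1 - P s)) ^ α * Δ s)
    (sα : ℝ) (hmem : sα ∈ Set.Icc a b)
    (hmax : ∀ s ∈ Set.Icc a b, Δα s ≤ Δα sα)
    (hpos : 0 < Δα sα)
    (r : ℝ)
    (hr : r = ((2 : ℝ) ^ (-α) * (1 - α) ^ 2 * Δα sα /
        (G sα ^ 2 + (1 - α) ^ 2 * Δα sα)) ^ (1 / (α + 1))) :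
    r ≤ 4 * P sα * (1 - P sα) ∧
    P sα ∈ Set.Icc ((1 - Real.sqrt (1 - r)) / 2) ((1 + Real.sqrt (1 - r)) / 2) ∧
    (1 - P sα) ∈ Set.Icc ((1 - Real.sqrt (1 - r)) / 2) ((1 + Real.sqrt (1 - r)) / 2) :=
  penalized_best_split_probability_bounds_general a b p g hp_cont hp_pos hp_one hg_cont P M Xi G Δ
    hP hM hXi hG hΔ α hα Δα hΔα sα hmem hmax hpos r hr
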